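/- arXiv:1702.00428 — 4 statements merged into one kernel-verified Lean document; each statement's English description precedes it below -/
import Mathlib

section
/- Let d ≥ 1 and a ∈ (0,1), γ > 0 be real numbers, let (A_n)_{n≥1} be a sequence of positive reals, let (x_n)_{n≥1} be a sequence of vectors in R^d, and let N ≥ 1 be an integer such that for all n > N: (i) ||x_n||_∞ ≤ a log n, (ii) A_n ≥ γ n, and (iii) γ n ≥ A_1 n^a exp(||x_1||_∞). Then for every i ∈ {1,...,d}, sup_{n≥1}(-log A_n + x_{n,i}) = max_{1≤n≤N}(-log A_n + x_{n,i}), where x_{n,i} denotes the i-th coordinate of x_n. -/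
/-! Beyond `N` the growth `A n ≥ γ n ≥ A 1 n^a exp ‖x 1‖` outweighs the gain `x n i ≤ a log n`:
taking logarithms, `-log A n + x n i ≤ -log A 1 - ‖x 1‖ ≤ -log A 1 + x 1 i`, so no term after
the first `N` beats the first one. -/

open Real

theorem ciSup_subtype_eq_sup'_of_le_sup' {α ι : Type*} [ConditionallyCompleteLattice α]
    {p : ι → Prop} {s : Finset ι} (hs : s.Nonempty) (f : ι → α) (hsp : ∀ i ∈ s, p i)
    (hle : ∀ i, p i → f i ≤ s.sup' hs f) :
    ⨆ i : {i // p i}, f i = s.sup' hs f := by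
  obtain ⟨i₀, hi₀⟩ := id hs
  have : Nonempty {i // p i} := ⟨⟨i₀, hsp i₀ hi₀⟩⟩
  have hbdd : BddAbove (Set.range fun i : {i // p i} => f i) :=
    ⟨s.sup' hs f, by rintro _ ⟨i, rfl⟩; exact hle i i.2⟩
  refine le_antisymm (ciSup_le fun i => hle i i.2) (Finset.sup'_le _ _ fun i hi => ?_)
  exact le_ciSup (f := fun i : {i // p i} => f i) hbdd ⟨i, hsp i hi⟩

theorem neg_log_add_le_neg_log_add {A B t a s y z : ℝ} (hB : 0 < B) (ht : 0 < t)
    (hBA : B * t ^ a * exp s ≤ A) (hy : y ≤ a * log t) (hz : -s ≤ z) :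
    -log A + y ≤ -log B + z := by
  have hpos : 0 < B * t ^ a := mul_pos hB (rpow_pos_of_pos ht a)
  have hlog : log B + a * log t + s ≤ log A := by
    have := log_le_log (mul_pos hpos (exp_pos s)) hBA
    rwa [log_mul hpos.ne' (exp_ne_zero s), log_mul hB.ne' (rpow_pos_of_pos ht a).ne',
      log_rpow ht, log_exp] at this
  linarith

theorem neg_norm_le_apply {ι : Type*} [Fintype ι] (x : ι → ℝ) (i : ι) : -‖x‖ ≤ x i :=
  (abs_le.mp ((norm_le_pi_norm x i).trans_eq' (norm_eq_abs _).symm)).1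

theorem apply_le_norm {ι : Type*} [Fintype ι] (x : ι → ℝ) (i : ι) : x i ≤ ‖x‖ :=
  (le_abs_self _).trans ((norm_le_pi_norm x i).trans_eq' (norm_eq_abs _).symm)

theorem record_breaking_truncates_sup_general
    {d : ℕ}
    (a γ : ℝ)
    (A : ℕ → ℝ) (hApos : ∀ n, 0 < A n)
    (x : ℕ → Fin d → ℝ)
    (N : ℕ) (hN : 1 ≤ N)
    (hX : ∀ n : ℕ, N < n → ‖x n‖ ≤ a * Real.log n)
    (hA : ∀ n : ℕ, N < n → γ * n ≤ A n)
    (hAa : ∀ n : ℕ, N < n → A 1 * (n : ℝ) ^ a * Real.exp ‖x 1‖ ≤ γ * n) :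
    ∀ i : Fin d,
      (⨆ n : {m : ℕ // 1 ≤ m}, (-Real.log (A n.1) + x n.1 i))
        = (Finset.Icc 1 N).sup' (Finset.nonempty_Icc.mpr hN)
            (fun n => -Real.log (A n) + x n i) := by
  intro i
  set f : ℕ → ℝ := fun n => -log (A n) + x n i
  refine ciSup_subtype_eq_sup'_of_le_sup' _ f (fun n hn => (Finset.mem_Icc.mp hn).1)
    fun n hn => ?_
  rcases le_or_gt n N with hnN | hNn
  · exact Finset.le_sup' f (Finset.mem_Icc.mpr ⟨hn, hnN⟩)
  · have hf1 : f n ≤ f 1 :=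
      neg_log_add_le_neg_log_add (hApos 1) (by exact_mod_cast hn) ((hAa n hNn).trans (hA n hNn))
        ((apply_le_norm (x n) i).trans (hX n hNn)) (neg_norm_le_apply (x 1) i)
    exact hf1.trans (Finset.le_sup' f (Finset.mem_Icc.mpr ⟨le_rfl, hN⟩))

/-- **deterministic record-breaking lemma.** If for all `n > N` one has
`‖x_n‖_∞ ≤ a log n`, `A_n ≥ γ n` and `γ n ≥ A_1 n^a exp(‖x_1‖_∞)`, then for every coordinate
`i`, `sup_{n ≥ 1} (-log A_n + x_{n,i}) = max_{1 ≤ n ≤ N} (-log A_n + x_{n,i})`.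
(The sup norm `‖·‖` on `Fin d → ℝ` is `‖x‖_∞ = max_i |x_i|`.) -/
theorem record_breaking_truncates_sup
    {d : ℕ} (hd : 1 ≤ d)
    (a γ : ℝ) (ha0 : 0 < a) (ha1 : a < 1) (hγ : 0 < γ)
    (A : ℕ → ℝ) (hApos : ∀ n, 0 < A n)
    (x : ℕ → Fin d → ℝ)
    (N : ℕ) (hN : 1 ≤ N)
    (hX : ∀ n : ℕ, N < n → ‖x n‖ ≤ a * Real.log n)
    (hA : ∀ n : ℕ, N < n → γ * n ≤ A n)
    (hAa : ∀ n : ℕ, N < n → A 1 * (n : ℝ) ^ a * Real.exp ‖x 1‖ ≤ γ * n) :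
    ∀ i : Fin d,
      (⨆ n : {m : ℕ // 1 ≤ m}, (-Real.log (A n.1) + x n.1 i))
        = (Finset.Icc 1 N).sup' (Finset.nonempty_Icc.mpr hN)
            (fun n => -Real.log (A n) + x n i) :=
  record_breaking_truncates_sup_general a γ A hApos x N hN hX hA hAa
end

section
/- Let (Δ̄_k)_{k≥1} be integrable random variables with Σ_{k=1}^∞ E|Δ̄_k| < ∞, let g : {1,2,...} → (0,1] and let L be a positive-integer-valued random variable, independent of the sequence (Δ̄_k), with P(L ≥ k) = g(k) for all k ≥ 1. Then V = Σ_{k=1}^L Δ̄_k/g(k) is integrable and E[V] = Σ_{k=1}^∞ E[Δ̄_k]. -/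
open MeasureTheory ProbabilityTheory
open scoped NNReal ENNReal

noncomputable section

/-- **unbiasedness of randomized multilevel Monte Carlo.** If `(Δ̄_k)_{k≥1}` are
integrable with `∑_k E|Δ̄_k| < ∞`, and `L` is a positive-integer-valued random variable,
independent of the sequence, with `P(L ≥ k) = g(k) ∈ (0,1]`, then `V = ∑_{k=1}^L Δ̄_k / g(k)`
is integrable and `E[V] = ∑_{k=1}^∞ E[Δ̄_k]`. -/
theorem rmlmc_unbiased
    {Ω : Type*} [MeasurableSpace Ω] (P : Measure Ω) [IsProbabilityMeasure P]
    (D : ℕ → Ω → ℝ) (hDmeas : ∀ k, Measurable (D k))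
    (hDint : ∀ k, Integrable (D k) P)
    (hDsum : Summable (fun k : ℕ => ∫ ω, |D (k + 1) ω| ∂P))
    (g : ℕ → ℝ) (hg : ∀ k : ℕ, 1 ≤ k → 0 < g k ∧ g k ≤ 1)
    (L : Ω → ℕ) (hLmeas : Measurable L) (hLpos : ∀ ω, 1 ≤ L ω)
    (hLtail : ∀ k : ℕ, 1 ≤ k → P {ω | k ≤ L ω} = ENNReal.ofReal (g k))
    (hLindep : IndepFun L (fun ω => fun k => D k ω) P)
    (V : Ω → ℝ) (hV : ∀ ω, V ω = ∑ k ∈ Finset.Icc 1 (L ω), D k ω / g k) :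
    Integrable V P ∧ ∫ ω, V ω ∂P = ∑' k : ℕ, ∫ ω, D (k + 1) ω ∂P := by
  classical
  -- the indicator of the event `k ≤ L`
  set χ : ℕ → Ω → ℝ := fun k ω => if k ≤ L ω then (1 : ℝ) else 0 with hχdef
  set f : ℕ → Ω → ℝ := fun k ω => χ k ω * (D k ω / g k) with hfdef
  have hχmeas : ∀ k, Measurable (χ k) := by
    intro k
    exact (measurable_of_countable (fun n : ℕ => if k ≤ n then (1 : ℝ) else 0)).comp hLmeas
  have hχle : ∀ k ω, ‖χ k ω‖ ≤ 1 := by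
    intro k ω
    simp only [hχdef]
    split <;> simp
  have hfmeas : ∀ k, Measurable (f k) := fun k =>
    (hχmeas k).mul ((hDmeas k).div_const _)
  have hfint : ∀ k, Integrable (f k) P := by
    intro k
    exact ((hDint k).div_const (g k)).bdd_mul (hχmeas k).aestronglyMeasurable (Filter.Eventually.of_forall (hχle k))
  -- the independence computation
  have key : ∀ k : ℕ, 1 ≤ k → ∀ h : ℝ → ℝ, Measurable h →
      ∫ ω, χ k ω * (h (D k ω) / g k) ∂P = ∫ ω, h (D k ω) ∂P := by
    intro k hk h hh
    have hgk := hg k hk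
    have hind : IndepFun (χ k) (fun ω => h (D k ω) / g k) P := by
      have := hLindep.comp (φ := fun n : ℕ => if k ≤ n then (1 : ℝ) else 0)
        (ψ := fun v : ℕ → ℝ => h (v k) / g k) (measurable_of_countable _)
        ((hh.comp (measurable_pi_apply k)).div_const _)
      exact this
    have hmul := hind.integral_fun_mul_eq_mul_integral (hχmeas k).aestronglyMeasurable
      ((hh.comp (hDmeas k)).div_const _).aestronglyMeasurable
    have hχint : ∫ ω, χ k ω ∂P = g k := by
      have hset : MeasurableSet {ω | k ≤ L ω} := hLmeas (measurableSet_le measurable_const measurable_id)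
      have : χ k = Set.indicator {ω | k ≤ L ω} (fun _ => (1 : ℝ)) := by
        funext ω
        simp [hχdef, Set.indicator_apply, Set.mem_setOf_eq]
      rw [this]
      rw [show ({ω | k ≤ L ω}.indicator fun _ => (1 : ℝ)) = {ω | k ≤ L ω}.indicator 1 from rfl,
        integral_indicator_one hset, measureReal_def, hLtail k hk, ENNReal.toReal_ofReal hgk.1.le]
    rw [hmul, hχint, integral_div]
    rw [mul_div_assoc']
    exact mul_div_cancel_left₀ _ hgk.1.ne'
  -- expectation and absolute expectation of each `f k`
  have hfavg : ∀ k : ℕ, 1 ≤ k → ∫ ω, f k ω ∂P = ∫ ω, D k ω ∂P := by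
    intro k hk
    simpa using key k hk id measurable_id
  have hχabs : ∀ k : ℕ, 1 ≤ k → ∀ ω, ‖f k ω‖ = χ k ω * (|D k ω| / g k) := by
    intro k hk ω
    simp only [hfdef, hχdef, Real.norm_eq_abs]
    split
    · rw [one_mul, one_mul, abs_div, abs_of_pos (hg k hk).1]
    · simp
  have hfabs : ∀ k : ℕ, 1 ≤ k → ∫ ω, ‖f k ω‖ ∂P = ∫ ω, |D k ω| ∂P := by
    intro k hk
    have := key k hk (fun x => |x|) measurable_abs
    rw [← this]
    exact integral_congr_ae (Filter.Eventually.of_forall fun ω => hχabs k hk ω)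
  -- pointwise identification of V with sums of the `f (k+1)`
  have hVsum : ∀ (ω : Ω) (n : ℕ), L ω ≤ n →
      ∑ k ∈ Finset.range n, f (k + 1) ω = V ω := by
    intro ω n hn
    rw [hV]
    have h1 : ∑ k ∈ Finset.range n, f (k + 1) ω = ∑ j ∈ Finset.Icc 1 n, f j ω := by
      rw [← Finset.Ico_add_one_right_eq_Icc, Finset.sum_Ico_eq_sum_range]
      simp [add_comm]
    rw [h1]
    rw [← Finset.sum_subset (Finset.Icc_subset_Icc_right hn)]
    · refine Finset.sum_congr rfl fun j hj => ?_
      simp only [Finset.mem_Icc] at hj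
      simp [hfdef, hχdef, hj.2]
    · intro j hj hj'
      simp only [Finset.mem_Icc, not_and, not_le] at hj hj'
      have : ¬ j ≤ L ω := not_le_of_gt (hj' hj.1)
      simp [hfdef, hχdef, this]
  have hVhasSum : ∀ ω, HasSum (fun k : ℕ => f (k + 1) ω) (V ω) := by
    intro ω
    have h0 : ∀ k ∉ Finset.range (L ω), f (k + 1) ω = 0 := by
      intro k hk
      simp only [Finset.mem_range, not_lt] at hk
      have : ¬ k + 1 ≤ L ω := by omega
      simp [hfdef, hχdef, this]
    have : HasSum (fun k : ℕ => f (k + 1) ω) (∑ k ∈ Finset.range (L ω), f (k + 1) ω) :=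
      hasSum_sum_of_ne_finset_zero h0
    rwa [hVsum ω (L ω) le_rfl] at this
  -- measurability of V
  have hVmeas : Measurable V := by
    apply measurable_of_tendsto_metrizable
      (f := fun n ω => ∑ k ∈ Finset.range n, f (k + 1) ω)
    · intro n
      exact Finset.measurable_sum _ fun k _ => hfmeas (k + 1)
    · rw [tendsto_pi_nhds]
      intro ω
      refine tendsto_atTop_of_eventually_const (i₀ := L ω) fun n hn => hVsum ω n hn
  -- summability of norms
  have habs_nonneg : ∀ k : ℕ, 0 ≤ ∫ ω, |D (k + 1) ω| ∂P := fun k =>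
    integral_nonneg fun ω => abs_nonneg _
  have hnormsum : Summable fun k : ℕ => ∫ ω, ‖f (k + 1) ω‖ ∂P := by
    apply hDsum.congr
    intro k
    exact (hfabs (k + 1) (by omega)).symm
  -- integrability of V
  have hVint : Integrable V P := by
    refine ⟨hVmeas.aestronglyMeasurable, ?_⟩
    show ∫⁻ ω, (‖V ω‖₊ : ℝ≥0∞) ∂P < ⊤
    calc ∫⁻ ω, (‖V ω‖₊ : ℝ≥0∞) ∂P
        ≤ ∫⁻ ω, ∑' k : ℕ, (‖f (k + 1) ω‖₊ : ℝ≥0∞) ∂P := by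
          apply lintegral_mono
          intro ω
          show (‖V ω‖₊ : ℝ≥0∞) ≤ ∑' k : ℕ, (‖f (k + 1) ω‖₊ : ℝ≥0∞)
          rw [← hVsum ω (L ω) le_rfl]
          calc (‖∑ k ∈ Finset.range (L ω), f (k + 1) ω‖₊ : ℝ≥0∞)
              ≤ ∑ k ∈ Finset.range (L ω), (‖f (k + 1) ω‖₊ : ℝ≥0∞) := by
                exact_mod_cast ENNReal.coe_le_coe.2 (nnnorm_sum_le _ _)
            _ ≤ ∑' k : ℕ, (‖f (k + 1) ω‖₊ : ℝ≥0∞) := ENNReal.sum_le_tsum _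
      _ = ∑' k : ℕ, ∫⁻ ω, (‖f (k + 1) ω‖₊ : ℝ≥0∞) ∂P :=
          lintegral_tsum fun k => (hfmeas (k + 1)).nnnorm.coe_nnreal_ennreal.aemeasurable
      _ = ∑' k : ℕ, ENNReal.ofReal (∫ ω, ‖f (k + 1) ω‖ ∂P) := by
          refine tsum_congr fun k => ?_
          rw [ofReal_integral_norm_eq_lintegral_enorm (hfint (k + 1))]
          rfl
      _ < ⊤ := by
          rw [← ENNReal.ofReal_tsum_of_nonneg (fun k => integral_nonneg fun ω => norm_nonneg _)
            hnormsum]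
          exact ENNReal.ofReal_lt_top
  refine ⟨hVint, ?_⟩
  have hVeq : ∀ ω, V ω = ∑' k : ℕ, f (k + 1) ω := fun ω => ((hVhasSum ω).tsum_eq).symm
  calc ∫ ω, V ω ∂P = ∫ ω, ∑' k : ℕ, f (k + 1) ω ∂P := integral_congr_ae
        (Filter.Eventually.of_forall hVeq)
    _ = ∑' k : ℕ, ∫ ω, f (k + 1) ω ∂P :=
        (integral_tsum_of_summable_integral_norm (fun k => hfint (k + 1)) hnormsum).symm
    _ = ∑' k : ℕ, ∫ ω, D (k + 1) ω ∂P := tsum_congr fun k => hfavg (k + 1) (by omega)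
end
end

section
/- Let (Δ̄_k)_{k≥1} be mutually independent square-integrable random variables, let g : {1,2,...} → (0,1] and let L be a positive-integer-valued random variable, independent of the sequence (Δ̄_k), with P(L ≥ k) = g(k) for all k ≥ 1. Assume Σ_{k=1}^∞ E[Δ̄_k²]/g(k) < ∞ and Σ_{1≤j<k} |E[Δ̄_j]| |E[Δ̄_k]| / g(j) < ∞. Then V = Σ_{k=1}^L Δ̄_k/g(k) is square integrable and E[V²] = Σ_{k=1}^∞ E[Δ̄_k²]/g(k) + 2 Σ_{1≤j<k} E[Δ̄_j] E[Δ̄_k] / g(j); in particular V has finite variance. -/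
/-!
On `{L = n}` the estimator `V` is the partial sum `S_n = ∑_{i<n} Y_i` of `Y_i = Δ̄_{i+1}/g(i+1)`,
and `L` is independent of the `Δ̄`'s, so `E[V²; L = n] = P(L = n) E[S_n²]
= P(L = n) ∑_{i,j<n} E[Y_i Y_j]`. Summing over `n` and exchanging the order of summation gives
`∑_{i,j} E[Y_i Y_j] P(L > max(i, j)) = ∑_{i,j} E[Y_i Y_j] g(max(i, j) + 1)`. The exchange is
legitimate because this double series converges absolutely: by independence of the `Δ̄`'s its
diagonal is `∑ E[Δ̄_k²]/g(k)` and each of its two off-diagonal halves is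
`∑_{j<k} E[Δ̄_j] E[Δ̄_k]/g(j)`.
-/

open MeasureTheory ProbabilityTheory

def diagSumOffDiagEquiv : ℕ ⊕ (ℕ × ℕ) ⊕ (ℕ × ℕ) ≃ ℕ × ℕ where
  toFun := Sum.elim (fun k => (k, k))
    (Sum.elim (fun q => (q.1, q.1 + q.2 + 1)) (fun q => (q.1 + q.2 + 1, q.1)))
  invFun x :=
    if x.1 = x.2 then .inl x.1
    else if x.1 < x.2 then .inr (.inl (x.1, x.2 - x.1 - 1))
    else .inr (.inr (x.2, x.1 - x.2 - 1))
  left_inv := by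
    rintro (k | ⟨m, n⟩ | ⟨m, n⟩)
    · simp
    · simp [show m ≠ m + n + 1 by omega]; omega
    · simp [show m + n + 1 ≠ m by omega, show ¬m + n + 1 < m by omega]; omega
  right_inv := by
    rintro ⟨a, b⟩
    dsimp only
    split_ifs <;> simp <;> omega

theorem hasSum_prod_nat_of_symm {M : Type*} [AddCommMonoid M] [TopologicalSpace M]
    [ContinuousAdd M] {u : ℕ × ℕ → M} (hu : ∀ a b, u (a, b) = u (b, a)) {a b : M}
    (hdiag : HasSum (fun k => u (k, k)) a)
    (hoff : HasSum (fun q : ℕ × ℕ => u (q.1, q.1 + q.2 + 1)) b) :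
    HasSum u (a + 2 • b) := by
  have hoff' : HasSum (fun q : ℕ × ℕ => u (q.1 + q.2 + 1, q.1)) b := by
    simpa only [hu _ (Prod.fst _)] using hoff
  rw [two_nsmul, ← diagSumOffDiagEquiv.hasSum_iff]
  exact hdiag.sum (hoff.sum hoff')

open Finset in
theorem hasSum_mul_sum_range_prod_of_hasSum_tail {p τ : ℕ → ℝ} (hp : ∀ n, 0 ≤ p n)
    (hτ : ∀ m, HasSum (fun n => if m < n then p n else 0) (τ m))
    {c : ℕ × ℕ → ℝ} {s : ℝ} (hc : HasSum (fun q => c q * τ (max q.1 q.2)) s) :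
    HasSum (fun n => p n * ∑ q ∈ range n ×ˢ range n, c q) s := by
  set T : (ℕ × ℕ) × ℕ → ℝ := fun x => c x.1 * if max x.1.1 x.1.2 < x.2 then p x.2 else 0
  have hfiber : ∀ q, HasSum (fun n => T (q, n)) (c q * τ (max q.1 q.2)) :=
    fun q => (hτ _).mul_left _
  have hfiber_abs : ∀ q, HasSum (fun n => |T (q, n)|) |c q * τ (max q.1 q.2)| := by
    intro q
    have hτ_nonneg : 0 ≤ τ (max q.1 q.2) := (hτ _).nonneg fun n => by split_ifs <;> simp [hp]
    rw [abs_mul, abs_of_nonneg hτ_nonneg]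
    refine ((hτ _).mul_left |c q|).congr_fun fun n => ?_
    simp only [T, abs_mul]
    split_ifs <;> simp [abs_of_nonneg (hp _)]
  have hT : HasSum T s := by
    have habs : Summable fun x => |T x| := (summable_prod_of_nonneg fun _ => abs_nonneg _).2
      ⟨fun q => (hfiber_abs q).summable, by simpa [(hfiber_abs _).tsum_eq] using hc.summable.abs⟩
    obtain ⟨t, ht⟩ := habs.of_abs
    rwa [(ht.prod_fiberwise hfiber).unique hc] at ht
  refine ((Equiv.prodComm _ _).hasSum_iff.2 hT).prod_fiberwise fun n => ?_
  have hzero : ∀ q ∉ range n ×ˢ range n, T (q, n) = 0 := by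
    intro q hq
    simp only [mem_product, mem_range, not_and_or, not_lt] at hq
    simp only [T]
    rw [if_neg (by omega), mul_zero]
  have hsum : ∑ q ∈ range n ×ˢ range n, T (q, n) = p n * ∑ q ∈ range n ×ˢ range n, c q := by
    rw [mul_sum]
    refine sum_congr rfl fun q hq => ?_
    simp only [mem_product, mem_range] at hq
    simp only [T]
    rw [if_pos (by omega), mul_comm]
  exact hsum ▸ hasSum_sum_of_ne_finset_zero hzero

section Measure

variable {Ω : Type*} [MeasurableSpace Ω] {μ : Measure Ω}

theorem hasSum_indicator_measureReal_preimage_singleton [IsFiniteMeasure μ] {ι : Type*}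
    [Countable ι] [MeasurableSpace ι] [MeasurableSingletonClass ι] {L : Ω → ι}
    (hL : Measurable L) (s : Set ι) :
    HasSum (s.indicator fun i => μ.real (L ⁻¹' {i})) (μ.real (L ⁻¹' s)) := by
  have hμ := tsum_measure_preimage_singleton (μ := μ) s.to_countable
    fun i _ => hL (measurableSet_singleton i)
  rw [← hasSum_subtype_iff_indicator, measureReal_def, ← hμ,
    ENNReal.tsum_toReal_eq fun _ => measure_ne_top _ _]
  exact (ENNReal.summable_toReal (hμ ▸ measure_ne_top _ _)).hasSum

theorem setIntegral_preimage_eq_measureReal_mul_integral {α β : Type*} [MeasurableSpace α]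
    [MeasurableSpace β] {L : Ω → α} {X : Ω → β}
    (hind : IndepFun L X μ) (hL : Measurable L) (hX : Measurable X) {f : β → ℝ}
    (hf : Measurable f) {s : Set α} (hs : MeasurableSet s) :
    ∫ ω in L ⁻¹' s, f (X ω) ∂μ = μ.real (L ⁻¹' s) * ∫ ω, f (X ω) ∂μ := by
  have hmul := (hind.comp (measurable_one.indicator hs) hf).integral_mul_eq_mul_integral
    ((measurable_one.indicator hs).comp hL).aestronglyMeasurable
    (hf.comp hX).aestronglyMeasurable
  have hone : s.indicator 1 ∘ L = (L ⁻¹' s).indicator (1 : Ω → ℝ) := by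
    ext ω; by_cases h : L ω ∈ s <;> simp [h]
  rw [hone, integral_indicator_one (hL hs)] at hmul
  rw [← integral_indicator (hL hs)]
  refine Eq.trans ?_ hmul
  congr 1 with ω
  by_cases h : L ω ∈ s <;> simp [h]

theorem integrable_and_hasSum_setIntegral_preimage_singleton {ι E : Type*}
    [NormedAddCommGroup E] [NormedSpace ℝ E] [Countable ι] [MeasurableSpace ι]
    [MeasurableSingletonClass ι] {L : Ω → ι}
    (hL : Measurable L) {Z : Ω → E} (hZ : ∀ i, IntegrableOn Z (L ⁻¹' {i}) μ)
    (hsum : Summable fun i => ∫ ω in L ⁻¹' {i}, ‖Z ω‖ ∂μ) :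
    Integrable Z μ ∧ HasSum (fun i => ∫ ω in L ⁻¹' {i}, Z ω ∂μ) (∫ ω, Z ω ∂μ) := by
  have hU : ⋃ i, L ⁻¹' {i} = Set.univ := by ext; simp
  have hint := integrableOn_iUnion_of_summable_integral_norm hZ hsum
  refine ⟨by rwa [hU, integrableOn_univ] at hint, ?_⟩
  simpa [hU] using hasSum_integral_iUnion (fun i => hL (measurableSet_singleton i))
    (pairwise_disjoint_fiber L) hint

theorem integral_sq_sum_eq_sum_integral_mul {ι : Type*} {X : ι → Ω → ℝ} (s : Finset ι)
    (hX : ∀ i ∈ s, MemLp (X i) 2 μ) :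
    ∫ ω, (∑ i ∈ s, X i ω) ^ 2 ∂μ = ∑ q ∈ s ×ˢ s, ∫ ω, X q.1 ω * X q.2 ω ∂μ := by
  simp_rw [sq, Finset.sum_mul_sum, ← Finset.sum_product']
  refine integral_finsetSum _ fun q hq => ?_
  rw [Finset.mem_product] at hq
  exact (hX _ hq.1).integrable_mul (hX _ hq.2)

theorem memLp_sum_range_and_integral_sq_of_indepFun [IsFiniteMeasure μ] {X : ℕ → Ω → ℝ}
    (hXm : ∀ i, Measurable (X i)) (hX : ∀ i, MemLp (X i) 2 μ) {L : Ω → ℕ} (hL : Measurable L)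
    (hind : IndepFun L (fun ω i => X i ω) μ) {s : ℝ}
    (hs : HasSum (fun q : ℕ × ℕ =>
      (∫ ω, X q.1 ω * X q.2 ω ∂μ) * μ.real {ω | max q.1 q.2 < L ω}) s) :
    MemLp (fun ω => ∑ i ∈ Finset.range (L ω), X i ω) 2 μ ∧
      ∫ ω, (∑ i ∈ Finset.range (L ω), X i ω) ^ 2 ∂μ = s := by
  set S : ℕ → Ω → ℝ := fun n ω => ∑ i ∈ Finset.range n, X i ω
  have hfiber : ∀ n, ∫ ω in L ⁻¹' {n}, S (L ω) ω ^ 2 ∂μ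
      = μ.real (L ⁻¹' {n}) *
          ∑ q ∈ Finset.range n ×ˢ Finset.range n, ∫ ω, X q.1 ω * X q.2 ω ∂μ := by
    intro n
    have hs := hL (measurableSet_singleton n)
    calc ∫ ω in L ⁻¹' {n}, S (L ω) ω ^ 2 ∂μ = ∫ ω in L ⁻¹' {n}, S n ω ^ 2 ∂μ :=
          setIntegral_congr_fun hs fun ω (hω : L ω = n) => by rw [hω]
      _ = μ.real (L ⁻¹' {n}) * ∫ ω, S n ω ^ 2 ∂μ :=
          setIntegral_preimage_eq_measureReal_mul_integral hind hL (measurable_pi_lambda _ hXm)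
            (f := fun x => (∑ i ∈ Finset.range n, x i) ^ 2)
            ((Finset.measurable_sum _ fun i _ => measurable_pi_apply i).pow_const 2)
            (measurableSet_singleton n)
      _ = _ := by rw [integral_sq_sum_eq_sum_integral_mul _ fun i _ => hX i]
  have htail : ∀ m, HasSum (fun n => if m < n then μ.real (L ⁻¹' {n}) else 0)
      (μ.real {ω | m < L ω}) := fun m =>
    (hasSum_indicator_measureReal_preimage_singleton hL (Set.Ioi m)).congr_fun fun n => by
      simp [Set.indicator_apply]
  have hsum := (hasSum_mul_sum_range_prod_of_hasSum_tail (fun _ => measureReal_nonneg) htail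
    hs).congr_fun hfiber
  have hSm : Measurable fun ω => S (L ω) ω :=
    (measurable_from_prod_countable_left (f := fun x : Ω × ℕ => S x.2 x.1)
      fun n => Finset.measurable_sum (Finset.range n) fun i _ => hXm i).comp
      (measurable_id.prodMk hL)
  obtain ⟨hint, hsq⟩ := integrable_and_hasSum_setIntegral_preimage_singleton hL
    (Z := fun ω => S (L ω) ω ^ 2)
    (fun n => (memLp_finsetSum _ fun i _ => hX i).integrable_sq.integrableOn.congr_fun
      (fun ω (hω : L ω = n) => by rw [hω]) (hL (measurableSet_singleton n)))
    (by simpa only [Real.norm_of_nonneg (sq_nonneg _)] using hsum.summable)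
  exact ⟨(memLp_two_iff_integrable_sq hSm.aestronglyMeasurable).2 hint, hsq.unique hsum⟩

theorem hasSum_weighted_cross_moments {D : ℕ → Ω → ℝ} (hDm : ∀ k, Measurable (D k))
    (hD : iIndepFun D μ) {g : ℕ → ℝ} (hg : ∀ k, 0 < g (k + 1))
    (hsum1 : Summable fun k : ℕ => (∫ ω, D (k + 1) ω ^ 2 ∂μ) / g (k + 1))
    (hsum2 : Summable fun q : ℕ × ℕ =>
      |∫ ω, D (q.1 + 1) ω ∂μ| * |∫ ω, D (q.1 + q.2 + 2) ω ∂μ| / g (q.1 + 1)) :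
    HasSum (fun q : ℕ × ℕ =>
        (∫ ω, D (q.1 + 1) ω / g (q.1 + 1) * (D (q.2 + 1) ω / g (q.2 + 1)) ∂μ)
          * g (max q.1 q.2 + 1))
      ((∑' k : ℕ, (∫ ω, D (k + 1) ω ^ 2 ∂μ) / g (k + 1))
        + 2 * ∑' q : ℕ × ℕ,
          (∫ ω, D (q.1 + 1) ω ∂μ) * (∫ ω, D (q.1 + q.2 + 2) ω ∂μ) / g (q.1 + 1)) := by
  have hdiag : ∀ k, (∫ ω, D (k + 1) ω / g (k + 1) * (D (k + 1) ω / g (k + 1)) ∂μ)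
      * g (max k k + 1) = (∫ ω, D (k + 1) ω ^ 2 ∂μ) / g (k + 1) := by
    intro k
    have := (hg k).ne'
    simp only [max_self, div_mul_div_comm, integral_div]
    simp only [← sq]
    field_simp
  have hoff : ∀ q : ℕ × ℕ,
      (∫ ω, D (q.1 + 1) ω / g (q.1 + 1) *
          (D (q.1 + q.2 + 1 + 1) ω / g (q.1 + q.2 + 1 + 1)) ∂μ) * g (max q.1 (q.1 + q.2 + 1) + 1)
      = (∫ ω, D (q.1 + 1) ω ∂μ) * (∫ ω, D (q.1 + q.2 + 2) ω ∂μ) / g (q.1 + 1) := by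
    intro q
    have := (hg q.1).ne'
    have := (hg (q.1 + q.2 + 1)).ne'
    rw [max_eq_right (by omega)]
    simp only [div_mul_div_comm, integral_div]
    rw [(hD.indepFun (by omega)).integral_fun_mul_eq_mul_integral
      (hDm _).aestronglyMeasurable (hDm _).aestronglyMeasurable]
    field_simp
  have hsum2' : Summable fun q : ℕ × ℕ =>
      (∫ ω, D (q.1 + 1) ω ∂μ) * (∫ ω, D (q.1 + q.2 + 2) ω ∂μ) / g (q.1 + 1) :=
    .of_norm_bounded hsum2 fun q => by
      rw [Real.norm_eq_abs, abs_div, abs_mul, abs_of_pos (hg _)]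
  rw [two_mul, ← two_nsmul]
  exact hasSum_prod_nat_of_symm
    (fun a b => by simp only [mul_comm (D (a + 1) _ / _), max_comm])
    (hsum1.hasSum.congr_fun hdiag) (hsum2'.hasSum.congr_fun hoff)

end Measure

theorem rmlmc_second_moment_general
    {Ω : Type*} [MeasurableSpace Ω] (P : Measure Ω) [IsProbabilityMeasure P]
    (D : ℕ → Ω → ℝ) (hDmeas : ∀ k, Measurable (D k))
    (hDsq : ∀ k, MemLp (D k) 2 P)
    (hDindep : iIndepFun D P)
    (g : ℕ → ℝ) (hg : ∀ k : ℕ, 1 ≤ k → 0 < g k ∧ g k ≤ 1)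
    (L : Ω → ℕ) (hLmeas : Measurable L)
    (hLtail : ∀ k : ℕ, 1 ≤ k → P {ω | k ≤ L ω} = ENNReal.ofReal (g k))
    (hLindep : IndepFun L (fun ω => fun k => D k ω) P)
    (hsum1 : Summable (fun k : ℕ => (∫ ω, (D (k + 1) ω) ^ 2 ∂P) / g (k + 1)))
    (hsum2 : Summable (fun q : ℕ × ℕ =>
      |∫ ω, D (q.1 + 1) ω ∂P| * |∫ ω, D (q.1 + q.2 + 2) ω ∂P| / g (q.1 + 1)))
    (V : Ω → ℝ) (hV : ∀ ω, V ω = ∑ k ∈ Finset.Icc 1 (L ω), D k ω / g k) :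
    MemLp V 2 P ∧
    (∫ ω, (V ω) ^ 2 ∂P
      = (∑' k : ℕ, (∫ ω, (D (k + 1) ω) ^ 2 ∂P) / g (k + 1))
        + 2 * ∑' q : ℕ × ℕ,
            (∫ ω, D (q.1 + 1) ω ∂P) * (∫ ω, D (q.1 + q.2 + 2) ω ∂P) / g (q.1 + 1)) ∧
    evariance V P < ⊤ := by
  have hgpos : ∀ k, 0 < g (k + 1) := fun k => (hg (k + 1) k.succ_pos).1
  have hVX : V = fun ω => ∑ i ∈ Finset.range (L ω), D (i + 1) ω / g (i + 1) := by
    ext ω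
    rw [hV, Finset.range_eq_Ico, Finset.sum_Ico_add' (fun k => D k ω / g k) 0 (L ω) 1]
    rfl
  have htail : ∀ m, P.real {ω | m < L ω} = g (m + 1) := fun m => by
    rw [measureReal_def, ← ENNReal.toReal_ofReal (hgpos m).le, ← hLtail (m + 1) (by omega)]
    rfl
  have hind : IndepFun L (fun ω i => D (i + 1) ω / g (i + 1)) P :=
    hLindep.comp measurable_id
      (measurable_pi_lambda _ fun i => (measurable_pi_apply (i + 1)).div_const _)
  obtain ⟨hmem, hsq⟩ := memLp_sum_range_and_integral_sq_of_indepFun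
    (fun i => (hDmeas (i + 1)).div_const _)
    (fun i => by simpa only [div_eq_inv_mul] using (hDsq (i + 1)).const_mul (g (i + 1))⁻¹)
    hLmeas hind
    (by simpa only [htail] using hasSum_weighted_cross_moments hDmeas hDindep hgpos hsum1 hsum2)
  rw [hVX]
  exact ⟨hmem, hsq, hmem.evariance_lt_top⟩

/-- **second moment of the randomized MLMC estimator.** If `(Δ̄_k)_{k≥1}` are
mutually independent and square integrable, `L` is independent of the sequence with
`P(L ≥ k) = g(k) ∈ (0,1]`, `∑_k E[Δ̄_k²]/g(k) < ∞` and
`∑_{1≤j<k} |E[Δ̄_j]||E[Δ̄_k]|/g(j) < ∞`, then `V = ∑_{k=1}^L Δ̄_k/g(k)` is square integrable,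
`E[V²] = ∑_{k≥1} E[Δ̄_k²]/g(k) + 2 ∑_{1≤j<k} E[Δ̄_j] E[Δ̄_k]/g(j)`, and `V` has finite variance.
(Pairs `1 ≤ j < k` are encoded by `(m, n) : ℕ × ℕ ↦ (j, k) = (m + 1, m + n + 2)`.) -/
theorem rmlmc_second_moment
    {Ω : Type*} [MeasurableSpace Ω] (P : Measure Ω) [IsProbabilityMeasure P]
    (D : ℕ → Ω → ℝ) (hDmeas : ∀ k, Measurable (D k))
    (hDsq : ∀ k, MemLp (D k) 2 P)
    (hDindep : iIndepFun D P)
    (g : ℕ → ℝ) (hg : ∀ k : ℕ, 1 ≤ k → 0 < g k ∧ g k ≤ 1)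
    (L : Ω → ℕ) (hLmeas : Measurable L) (hLpos : ∀ ω, 1 ≤ L ω)
    (hLtail : ∀ k : ℕ, 1 ≤ k → P {ω | k ≤ L ω} = ENNReal.ofReal (g k))
    (hLindep : IndepFun L (fun ω => fun k => D k ω) P)
    (hsum1 : Summable (fun k : ℕ => (∫ ω, (D (k + 1) ω) ^ 2 ∂P) / g (k + 1)))
    (hsum2 : Summable (fun q : ℕ × ℕ =>
      |∫ ω, D (q.1 + 1) ω ∂P| * |∫ ω, D (q.1 + q.2 + 2) ω ∂P| / g (q.1 + 1)))
    (V : Ω → ℝ) (hV : ∀ ω, V ω = ∑ k ∈ Finset.Icc 1 (L ω), D k ω / g k) :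
    MemLp V 2 P ∧
    (∫ ω, (V ω) ^ 2 ∂P
      = (∑' k : ℕ, (∫ ω, (D (k + 1) ω) ^ 2 ∂P) / g (k + 1))
        + 2 * ∑' q : ℕ × ℕ,
            (∫ ω, D (q.1 + 1) ω ∂P) * (∫ ω, D (q.1 + q.2 + 2) ω ∂P) / g (q.1 + 1)) ∧
    evariance V P < ⊤ :=
  rmlmc_second_moment_general P D hDmeas hDsq hDindep g hg L hLmeas hLtail hLindep hsum1 hsum2 V hV
end

section
/- Let ρ_1, ρ_2, ... be i.i.d. positive random variables with finite moments of every order and mean E[ρ_1] > 0, and let L be a positive-integer-valued random variable independent of (ρ_i) with P(L ≥ n) = g(n) = n^{-1}(log(n+e-1))^{-1}(log log(n+e^e-1))^{-1}. Then P(Σ_{i=1}^L ρ_i + 1 > t) ~ E[ρ_1] · t^{-1} (log t)^{-1} (log log t)^{-1} as t → ∞; that is, lim_{t→∞} t · log(t) · log log(t) · P(Σ_{i=1}^L ρ_i + 1 > t) = E[ρ_1]. -/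
/-!
Write `S_n = ρ_1 + ⋯ + ρ_n` and `μ = E[ρ_1]`. Since the `ρ_i` are nonnegative, `S_L + 1 > t`
essentially happens iff `L > t / μ`. A fourth-moment bound gives
`P(|S_n - n μ| ≥ δ t) = O(t⁻²)` for `n = O(t)`, which is negligible against the tail
`g(t) ≈ 1 / (t log t log log t)`. Comparing the event with `{L ≥ ⌈c t⌉}` for `c > 1/μ` (using the
independence of `L` and `(ρ_i)`) and with `{L > ⌊c t⌋}` for `c < 1/μ`, and using
`g(x) ~ g(t) / c` for `x ~ c t`, the normalized tail is squeezed between bounds tending to `1/c`;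
let `c → 1/μ`.
-/

open MeasureTheory ProbabilityTheory Real Filter Topology Asymptotics
open scoped ENNReal

noncomputable section

def logLogTail (x : ℝ) : ℝ :=
  x⁻¹ * (log (x + exp 1 - 1))⁻¹ * (log (log (x + exp (exp 1) - 1)))⁻¹

theorem logLogTail_nonneg {x : ℝ} (hx : 1 ≤ x) : 0 ≤ logLogTail x := by
  have h₁ : 0 ≤ log (x + exp 1 - 1) := log_nonneg (by linarith [add_one_le_exp (1 : ℝ)])
  have h₂ : 1 ≤ log (x + exp (exp 1) - 1) := by
    rw [le_log_iff_exp_le (by linarith [exp_pos (exp 1)])]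
    linarith [add_one_le_exp (exp 1)]
  have h₃ : 0 ≤ log (log (x + exp (exp 1) - 1)) := log_nonneg h₂
  unfold logLogTail
  positivity

theorem isLittleO_const_const_mul_atTop (a : ℝ) {c : ℝ} (hc : 0 < c) :
    (fun _ : ℝ => a) =o[atTop] fun t => c * t :=
  isLittleO_const_left.2 <| Or.inr <|
    tendsto_norm_atTop_atTop.comp (tendsto_id.const_mul_atTop hc)

theorem isEquivalent_log_of_isEquivalent_const_mul {u : ℝ → ℝ} {c : ℝ} (hc : 0 < c)
    (hu : u ~[atTop] fun t => c * t) : (fun t => log (u t)) ~[atTop] log := by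
  refine (hu.log (tendsto_id.const_mul_atTop hc)).trans ?_
  have hlog : (fun t => log t + log c) =ᶠ[atTop] fun t => log (c * t) := by
    filter_upwards [eventually_gt_atTop 0] with t ht
    rw [log_mul hc.ne' ht.ne', add_comm]
  refine IsEquivalent.congr_left ?_ hlog
  exact IsEquivalent.refl.add_isLittleO <| isLittleO_const_left.2 <| Or.inr <|
    tendsto_norm_atTop_atTop.comp tendsto_log_atTop

theorem tendsto_mul_logLogTail {x : ℝ → ℝ} {c : ℝ} (hc : 0 < c)
    (hx : x ~[atTop] fun t => c * t) :
    Tendsto (fun t => t * log t * log (log t) * logLogTail (x t)) atTop (𝓝 c⁻¹) := by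
  have hshift : ∀ a : ℝ, (fun t => x t + a - 1) ~[atTop] fun t => c * t := fun a => by
    refine (hx.add_isLittleO (isLittleO_const_const_mul_atTop (a - 1) hc)).congr_left ?_
    filter_upwards with t
    simp only [Pi.add_apply]
    ring
  have hlog := isEquivalent_log_of_isEquivalent_const_mul hc (hshift (exp 1))
  have hloglog := (isEquivalent_log_of_isEquivalent_const_mul hc (hshift (exp (exp 1)))).log
    tendsto_log_atTop
  have key := (IsEquivalent.refl (u := fun t => t * log t * log (log t))).mul
    ((hx.inv.mul hlog.inv).mul hloglog.inv)
  refine key.symm.tendsto_nhds (tendsto_const_nhds.congr' ?_)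
  filter_upwards [eventually_gt_atTop (exp 1)] with t ht
  have ht0 : 0 < t := (exp_pos 1).trans ht
  have hlog1 : 1 < log t := by rwa [lt_log_iff_exp_lt ht0]
  have hloglog0 : 0 < log (log t) := log_pos hlog1
  simp only [Pi.mul_apply, Pi.inv_apply]
  field_simp

theorem mul_log_mul_log_log_nonneg {t : ℝ} (ht : exp 1 ≤ t) : 0 ≤ t * log t * log (log t) := by
  have ht0 : 0 < t := (exp_pos 1).trans_le ht
  have hlog : 1 ≤ log t := by rwa [le_log_iff_exp_le ht0]
  have := log_nonneg hlog
  positivity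

theorem isLittleO_log_mul_log_log_id : (fun t => log t * log (log t)) =o[atTop] id := by
  have h := (isBigO_refl log atTop).mul_isLittleO
    (isLittleO_log_id_atTop.comp_tendsto tendsto_log_atTop)
  refine h.trans ?_
  simpa only [sq, Function.comp_def, id] using isLittleO_pow_log_id_atTop (n := 2)

theorem tendsto_mul_log_mul_log_log_mul_of_isBigO {φ : ℝ → ℝ}
    (hφ : φ =O[atTop] fun t => (t ^ 2)⁻¹) :
    Tendsto (fun t => t * log t * log (log t) * φ t) atTop (𝓝 0) := by
  refine ((isBigO_refl (fun t => t * log t * log (log t)) atTop).mul hφ).trans_tendsto ?_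
  refine isLittleO_log_mul_log_log_id.tendsto_div_nhds_zero.congr' ?_
  filter_upwards [eventually_gt_atTop 0] with t ht
  simp only [id]
  field_simp

theorem tendsto_nhds_of_forall_squeeze {α : Type*} {l : Filter α} {f : α → ℝ} {μ : ℝ}
    (hμ : 0 < μ) (upper : ∀ b, μ < b → ∃ u, Tendsto u l (𝓝 b) ∧ ∀ᶠ x in l, f x ≤ u x)
    (lower : ∀ b, 0 < b → b < μ → ∃ v, Tendsto v l (𝓝 b) ∧ ∀ᶠ x in l, v x ≤ f x) :
    Tendsto f l (𝓝 μ) := by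
  refine tendsto_order.2 ⟨fun a ha => ?_, fun a ha => ?_⟩
  · obtain ⟨b, hab, hbμ⟩ := exists_between (max_lt ha hμ)
    obtain ⟨v, hv, hvf⟩ := lower b ((le_max_right a 0).trans_lt hab) hbμ
    filter_upwards [hv.eventually (lt_mem_nhds ((le_max_left a 0).trans_lt hab)), hvf]
      with x h₁ h₂
    exact h₁.trans_le h₂
  · obtain ⟨b, hμb, hba⟩ := exists_between ha
    obtain ⟨u, hu, hfu⟩ := upper b hμb
    filter_upwards [hu.eventually (gt_mem_nhds hba), hfu] with x h₁ h₂
    exact h₂.trans_lt h₁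

section Moments

variable {Ω : Type*} [MeasurableSpace Ω] {P : Measure Ω}

theorem MeasureTheory.MemLp.integrable_pow [IsFiniteMeasure P] {f : Ω → ℝ} {p k : ℕ}
    (hf : MemLp f p P) (hk : k ≤ p) : Integrable (fun ω => f ω ^ k) P := by
  have h := (hf.mono_exponent (by exact_mod_cast hk : (k : ℝ≥0∞) ≤ p)).integrable_norm_pow'
  refine (integrable_norm_iff (hf.aestronglyMeasurable.pow k)).1 ?_
  simpa only [Pi.pow_apply, norm_pow] using h

theorem measureReal_abs_ge_le_integral_pow_div [IsFiniteMeasure P] {X : Ω → ℝ} {p : ℕ} {a : ℝ}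
    (ha : 0 < a) (hX : Integrable (fun ω => |X ω| ^ p) P) :
    P.real {ω | a ≤ |X ω|} ≤ (∫ ω, |X ω| ^ p ∂P) / a ^ p := by
  rw [le_div_iff₀ (pow_pos ha p), mul_comm]
  calc a ^ p * P.real {ω | a ≤ |X ω|} ≤ a ^ p * P.real {ω | a ^ p ≤ |X ω| ^ p} :=
        mul_le_mul_of_nonneg_left (measureReal_mono fun ω hω => pow_le_pow_left₀ ha.le hω p)
          (by positivity)
    _ ≤ ∫ ω, |X ω| ^ p ∂P :=
        mul_meas_ge_le_integral_of_nonneg (ae_of_all _ fun ω => by positivity) hX _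

theorem ProbabilityTheory.IndepFun.integral_add_pow [IsFiniteMeasure P] {T V : Ω → ℝ} {n : ℕ}
    (hTV : IndepFun T V P) (hT : MemLp T n P) (hV : MemLp V n P) :
    ∫ ω, (T ω + V ω) ^ n ∂P =
      ∑ k ∈ Finset.range (n + 1), (∫ ω, T ω ^ k ∂P) * (∫ ω, V ω ^ (n - k) ∂P) * n.choose k := by
  have hpow : ∀ k, IndepFun (fun ω => T ω ^ k) (fun ω => V ω ^ (n - k)) P := fun k =>
    hTV.comp (measurable_id.pow_const k) (measurable_id.pow_const (n - k))
  simp_rw [add_pow]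
  rw [integral_finsetSum]
  · refine Finset.sum_congr rfl fun k _ => ?_
    rw [integral_mul_const, ← (hpow k).integral_mul_eq_mul_integral
      (hT.aestronglyMeasurable.pow k) (hV.aestronglyMeasurable.pow (n - k))]
    rfl
  · intro k hk
    exact ((hpow k).integrable_mul (hT.integrable_pow (by simp at hk; omega))
      (hV.integrable_pow (Nat.sub_le n k))).mul_const _

variable [IsProbabilityMeasure P] {ι : Type*} {Y : ι → Ω → ℝ}

theorem ProbabilityTheory.iIndepFun.integral_sum_insert_pow [DecidableEq ι] (hY : iIndepFun Y P)
    {n : ℕ} (hYn : ∀ i, MemLp (Y i) n P) {j : ι} {s : Finset ι} (hj : j ∉ s) :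
    ∫ ω, (∑ i ∈ insert j s, Y i ω) ^ n ∂P = ∑ k ∈ Finset.range (n + 1),
      (∫ ω, (∑ i ∈ s, Y i ω) ^ k ∂P) * (∫ ω, Y j ω ^ (n - k) ∂P) * n.choose k := by
  have hind : IndepFun (fun ω => ∑ i ∈ s, Y i ω) (Y j) P := by
    simpa only [Finset.sum_fn] using
      hY.indepFun_finsetSum_of_notMem₀ (fun i => (hYn i).aemeasurable) hj
  simp_rw [Finset.sum_insert hj, add_comm (Y j _)]
  exact hind.integral_add_pow (memLp_finsetSum s fun i _ => hYn i) (hYn j)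

theorem ProbabilityTheory.iIndepFun.integral_sum_sq (hY : iIndepFun Y P)
    (hL2 : ∀ i, MemLp (Y i) 2 P) (h0 : ∀ i, ∫ ω, Y i ω ∂P = 0) {σ2 : ℝ}
    (h2 : ∀ i, ∫ ω, Y i ω ^ 2 ∂P = σ2) (s : Finset ι) :
    ∫ ω, (∑ i ∈ s, Y i ω) ^ 2 ∂P = s.card * σ2 := by
  classical
  induction s using Finset.induction_on with
  | empty => simp
  | insert j s hj ih =>
    have hsum0 : ∫ ω, ∑ i ∈ s, Y i ω ∂P = 0 := by
      rw [integral_finsetSum s fun i _ => (hL2 i).integrable one_le_two]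
      exact Finset.sum_eq_zero fun i _ => h0 i
    rw [hY.integral_sum_insert_pow hL2 hj]
    simp [Finset.sum_range_succ, Finset.card_insert_of_notMem hj, hsum0, ih, h0, h2]
    ring

theorem ProbabilityTheory.iIndepFun.integral_sum_pow_four (hY : iIndepFun Y P)
    (hL4 : ∀ i, MemLp (Y i) 4 P) (h0 : ∀ i, ∫ ω, Y i ω ∂P = 0) {σ2 m4 : ℝ}
    (h2 : ∀ i, ∫ ω, Y i ω ^ 2 ∂P = σ2) (h4 : ∀ i, ∫ ω, Y i ω ^ 4 ∂P = m4) (s : Finset ι) :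
    ∫ ω, (∑ i ∈ s, Y i ω) ^ 4 ∂P = s.card * m4 + 3 * s.card * (s.card - 1) * σ2 ^ 2 := by
  classical
  have hL2 : ∀ i, MemLp (Y i) 2 P := fun i => (hL4 i).mono_exponent (by norm_num)
  induction s using Finset.induction_on with
  | empty => simp
  | insert j s hj ih =>
    have hsum0 : ∫ ω, ∑ i ∈ s, Y i ω ∂P = 0 := by
      rw [integral_finsetSum s fun i _ => (hL4 i).integrable (by norm_num)]
      exact Finset.sum_eq_zero fun i _ => h0 i
    rw [hY.integral_sum_insert_pow hL4 hj]
    norm_num [Finset.sum_range_succ, Finset.card_insert_of_notMem hj, hsum0, ih, h0, h2, h4,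
      Nat.choose_two_right, hY.integral_sum_sq hL2 h0 h2]
    ring

end Moments

section RandomSum

variable {Ω : Type*} {ρ : ℕ → Ω → ℝ}

def partialSum (ρ : ℕ → Ω → ℝ) (n : ℕ) (ω : Ω) : ℝ := ∑ i ∈ Finset.Icc 1 n, ρ i ω

theorem partialSum_mono (hρ : ∀ i ω, 0 ≤ ρ i ω) (ω : Ω) : Monotone fun n => partialSum ρ n ω :=
  fun _ _ hmn => Finset.sum_le_sum_of_subset_of_nonneg (Finset.Icc_subset_Icc_right hmn)
    fun i _ _ => hρ i ω

variable [MeasurableSpace Ω] {P : Measure Ω} {L : Ω → ℕ}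

theorem measureReal_le_inter_lt_partialSum_eq_mul (hLρ : IndepFun L (fun ω i => ρ i ω) P)
    (n : ℕ) (t : ℝ) :
    P.real ({ω | n ≤ L ω} ∩ {ω | t < partialSum ρ n ω}) =
      P.real {ω | n ≤ L ω} * P.real {ω | t < partialSum ρ n ω} := by
  have hind : IndepFun L (partialSum ρ n) P :=
    hLρ.comp measurable_id (Finset.measurable_sum _ fun i _ => measurable_pi_apply i)
  simp only [measureReal_def, ← ENNReal.toReal_mul]
  exact congrArg ENNReal.toReal (hind.measure_inter_preimage_eq_mul (Set.Ici n) (Set.Ioi t)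
    measurableSet_Ici measurableSet_Ioi)

variable [IsProbabilityMeasure P]

theorem exists_measureReal_abs_partialSum_sub_ge_le (hρ : iIndepFun ρ P)
    (hident : ∀ i, IdentDistrib (ρ i) (ρ 1) P P) (hρ4 : MemLp (ρ 1) 4 P) :
    ∃ K, 0 ≤ K ∧ ∀ (n : ℕ) (a : ℝ), 0 < a →
      P.real {ω | a ≤ |partialSum ρ n ω - n * ∫ ω, ρ 1 ω ∂P|} ≤ K * n ^ 2 / a ^ 4 := by
  set μ := ∫ ω, ρ 1 ω ∂P
  set Y : ℕ → Ω → ℝ := fun i ω => ρ i ω - μ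
  have hYident : ∀ i, IdentDistrib (Y i) (Y 1) P P := fun i =>
    (hident i).comp (measurable_id.sub_const μ)
  have hY4 : ∀ i, MemLp (Y i) 4 P := fun i =>
    (hYident i).symm.memLp_snd (hρ4.sub (memLp_const μ))
  have hY0 : ∀ i, ∫ ω, Y i ω ∂P = 0 := fun i => by
    rw [(hYident i).integral_eq, integral_sub (hρ4.integrable (by norm_num)) (integrable_const μ)]
    simp [μ]
  have hmoment : ∀ k i, ∫ ω, Y i ω ^ k ∂P = ∫ ω, Y 1 ω ^ k ∂P := fun k i =>
    ((hYident i).comp (measurable_id.pow_const k)).integral_eq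
  have hYsum : ∀ n ω, partialSum ρ n ω - n * μ = ∑ i ∈ Finset.Icc 1 n, Y i ω := fun n ω => by
    simp [partialSum, Y, Finset.sum_sub_distrib]
  set σ2 := ∫ ω, Y 1 ω ^ 2 ∂P
  set m4 := ∫ ω, Y 1 ω ^ 4 ∂P
  have hm4 : 0 ≤ m4 := integral_nonneg fun ω => by positivity
  refine ⟨m4 + 3 * σ2 ^ 2, by positivity, fun n a ha => ?_⟩
  have hYindep : iIndepFun Y P := hρ.comp _ fun i => measurable_id.sub_const μ
  have hsum4 := hYindep.integral_sum_pow_four hY4 hY0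
    (hmoment 2) (hmoment 4) (Finset.Icc 1 n)
  simp only [Nat.card_Icc, add_tsub_cancel_right] at hsum4
  simp_rw [hYsum]
  calc _ ≤ (∫ ω, |∑ i ∈ Finset.Icc 1 n, Y i ω| ^ 4 ∂P) / a ^ 4 :=
        measureReal_abs_ge_le_integral_pow_div ha
          (by simpa only [Real.norm_eq_abs] using
            (memLp_finsetSum _ fun i _ => hY4 i).integrable_norm_pow' (p := 4))
    _ ≤ _ := by
        simp_rw [Even.pow_abs (by decide : Even 4), hsum4]
        gcongr
        have hn : (n : ℝ) ≤ n ^ 2 := by exact_mod_cast Nat.le_self_pow two_ne_zero n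
        nlinarith [mul_le_mul_of_nonneg_right hn hm4, sq_nonneg σ2, Nat.cast_nonneg (α := ℝ) n]

theorem isBigO_measureReal_abs_partialSum_sub_ge (hρ : iIndepFun ρ P)
    (hident : ∀ i, IdentDistrib (ρ i) (ρ 1) P P) (hρ4 : MemLp (ρ 1) 4 P) {n : ℝ → ℕ} {C δ : ℝ}
    (hδ : 0 < δ) (hn : ∀ᶠ t in atTop, (n t : ℝ) ≤ C * t) :
    (fun t => P.real {ω | δ * t ≤ |partialSum ρ (n t) ω - n t * ∫ ω, ρ 1 ω ∂P|})
      =O[atTop] fun t => (t ^ 2)⁻¹ := by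
  obtain ⟨K, hK, hbound⟩ := exists_measureReal_abs_partialSum_sub_ge_le hρ hident hρ4
  refine IsBigO.of_bound (K * C ^ 2 / δ ^ 4) ?_
  filter_upwards [hn, eventually_gt_atTop 0] with t hnt ht
  rw [Real.norm_of_nonneg measureReal_nonneg, Real.norm_of_nonneg (by positivity)]
  calc _ ≤ K * n t ^ 2 / (δ * t) ^ 4 := hbound _ _ (by positivity)
    _ ≤ K * (C * t) ^ 2 / (δ * t) ^ 4 := by gcongr
    _ = K * C ^ 2 / δ ^ 4 * (t ^ 2)⁻¹ := by field_simp

theorem measureReal_randomSum_tail_le (hρpos : ∀ i ω, 0 ≤ ρ i ω) {m : ℕ} {t δ μ : ℝ}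
    (h : m * μ + δ * t ≤ t - 1) :
    P.real {ω | t < partialSum ρ (L ω) ω + 1} ≤
      P.real {ω | m + 1 ≤ L ω} + P.real {ω | δ * t ≤ |partialSum ρ m ω - m * μ|} := by
  refine (measureReal_mono fun ω hω => ?_).trans (measureReal_union_le _ _)
  by_cases hLm : L ω ≤ m
  · have hS : partialSum ρ (L ω) ω ≤ partialSum ρ m ω := partialSum_mono hρpos ω hLm
    simp only [Set.mem_ofPred_eq] at hω
    exact Or.inr ((show δ * t ≤ partialSum ρ m ω - m * μ by linarith).trans (le_abs_self _))
  · exact Or.inl (by simp only [Set.mem_ofPred_eq]; omega)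

theorem le_measureReal_randomSum_tail (hρmeas : ∀ i, Measurable (ρ i))
    (hρpos : ∀ i ω, 0 ≤ ρ i ω) (hLρ : IndepFun L (fun ω i => ρ i ω) P) {n : ℕ} {t δ μ : ℝ}
    (h : t + δ * t ≤ n * μ) :
    P.real {ω | n ≤ L ω} * (1 - P.real {ω | δ * t ≤ |partialSum ρ n ω - n * μ|}) ≤
      P.real {ω | t < partialSum ρ (L ω) ω + 1} := by
  have hdev : 1 - P.real {ω | δ * t ≤ |partialSum ρ n ω - n * μ|} ≤
      P.real {ω | t < partialSum ρ n ω} := by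
    have hsub : {ω | t < partialSum ρ n ω}ᶜ ⊆ {ω | δ * t ≤ |partialSum ρ n ω - n * μ|} := by
      intro ω hω
      simp only [Set.mem_compl_iff, Set.mem_ofPred_eq, not_lt] at hω ⊢
      rw [abs_sub_comm]
      exact le_trans (by linarith) (le_abs_self _)
    have hmeas : MeasurableSet {ω | t < partialSum ρ n ω} :=
      measurableSet_lt measurable_const (Finset.measurable_sum _ fun i _ => hρmeas i)
    linarith [probReal_add_probReal_compl (μ := P) hmeas, measureReal_mono (μ := P) hsub]
  have hsub : {ω | n ≤ L ω} ∩ {ω | t < partialSum ρ n ω} ⊆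
      {ω | t < partialSum ρ (L ω) ω + 1} := fun ω ⟨hnL, hS⟩ => by
    have : partialSum ρ n ω ≤ partialSum ρ (L ω) ω := partialSum_mono hρpos ω hnL
    simp only [Set.mem_ofPred_eq] at hS ⊢
    linarith
  calc _ ≤ P.real {ω | n ≤ L ω} * P.real {ω | t < partialSum ρ n ω} := by gcongr
    _ = P.real ({ω | n ≤ L ω} ∩ {ω | t < partialSum ρ n ω}) :=
        (measureReal_le_inter_lt_partialSum_eq_mul hLρ n t).symm
    _ ≤ _ := measureReal_mono hsub

theorem exists_tendsto_ge_randomSum_tail (hρpos : ∀ i ω, 0 ≤ ρ i ω) (hρ : iIndepFun ρ P)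
    (hident : ∀ i, IdentDistrib (ρ i) (ρ 1) P P) (hρ4 : MemLp (ρ 1) 4 P)
    (hL : ∀ n : ℕ, 1 ≤ n → P.real {ω | n ≤ L ω} = logLogTail n) {b : ℝ}
    (hb : ∫ ω, ρ 1 ω ∂P < b) :
    ∃ u : ℝ → ℝ, Tendsto u atTop (𝓝 b) ∧ ∀ᶠ t in atTop,
      t * log t * log (log t) * P.real {ω | t < partialSum ρ (L ω) ω + 1} ≤ u t := by
  set μ := ∫ ω, ρ 1 ω ∂P
  have hμ : 0 ≤ μ := integral_nonneg fun ω => hρpos 1 ω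
  have hb0 : 0 < b := hμ.trans_lt hb
  set c := b⁻¹
  have hc : 0 < c := inv_pos.2 hb0
  set δ := (1 - c * μ) / 2 with hδdef
  have hδ : 0 < δ := by
    have : c * μ < 1 := by rwa [inv_mul_lt_one₀ hb0]
    linarith
  set m : ℝ → ℕ := fun t => ⌊c * t⌋₊
  set dev : ℝ → ℝ := fun t => P.real {ω | δ * t ≤ |partialSum ρ (m t) ω - m t * μ|}
  refine ⟨fun t => t * log t * log (log t) * logLogTail (m t + 1) +
    t * log t * log (log t) * dev t, ?_, ?_⟩
  · have hm : (fun t => (m t : ℝ) + 1) ~[atTop] fun t => c * t :=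
      (isEquivalent_nat_floor.comp_tendsto (tendsto_id.const_mul_atTop hc)).add_isLittleO
        (isLittleO_const_const_mul_atTop 1 hc)
    have hmle : ∀ᶠ t in atTop, (m t : ℝ) ≤ c * t := by
      filter_upwards [eventually_ge_atTop 0] with t ht using Nat.floor_le (by positivity)
    have hdev := tendsto_mul_log_mul_log_log_mul_of_isBigO
      (isBigO_measureReal_abs_partialSum_sub_ge hρ hident hρ4 hδ hmle)
    simpa [c] using (tendsto_mul_logLogTail hc hm).add hdev
  · filter_upwards [eventually_ge_atTop δ⁻¹, eventually_ge_atTop (exp 1)] with t htδ ht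
    have ht0 : 0 < t := (exp_pos 1).trans_le ht
    have hδt : 1 ≤ δ * t := by rwa [← inv_mul_le_iff₀ hδ, mul_one]
    have hmμ : (m t : ℝ) * μ ≤ c * t * μ :=
      mul_le_mul_of_nonneg_right (Nat.floor_le (by positivity)) hμ
    have hctμ : c * t * μ = t - 2 * δ * t := by rw [hδdef]; ring
    calc _ ≤ t * log t * log (log t) * (P.real {ω | m t + 1 ≤ L ω} + dev t) :=
          mul_le_mul_of_nonneg_left (measureReal_randomSum_tail_le hρpos (by linarith))
            (mul_log_mul_log_log_nonneg ht)
      _ = _ := by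
          rw [hL _ (Nat.le_add_left 1 _)]
          push_cast
          ring

theorem exists_tendsto_le_randomSum_tail (hρmeas : ∀ i, Measurable (ρ i))
    (hρpos : ∀ i ω, 0 ≤ ρ i ω) (hρ : iIndepFun ρ P)
    (hident : ∀ i, IdentDistrib (ρ i) (ρ 1) P P) (hρ4 : MemLp (ρ 1) 4 P)
    (hL : ∀ n : ℕ, 1 ≤ n → P.real {ω | n ≤ L ω} = logLogTail n)
    (hLρ : IndepFun L (fun ω i => ρ i ω) P) {b : ℝ} (hb0 : 0 < b) (hb : b < ∫ ω, ρ 1 ω ∂P) :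
    ∃ v : ℝ → ℝ, Tendsto v atTop (𝓝 b) ∧ ∀ᶠ t in atTop,
      v t ≤ t * log t * log (log t) * P.real {ω | t < partialSum ρ (L ω) ω + 1} := by
  set μ := ∫ ω, ρ 1 ω ∂P
  have hμ : 0 ≤ μ := integral_nonneg fun ω => hρpos 1 ω
  set c := b⁻¹
  have hc : 0 < c := inv_pos.2 hb0
  set δ := c * μ - 1 with hδdef
  have hδ : 0 < δ := by
    have : 1 < c * μ := by rwa [one_lt_inv_mul₀ hb0]
    linarith
  set n : ℝ → ℕ := fun t => ⌈c * t⌉₊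
  set dev : ℝ → ℝ := fun t => P.real {ω | δ * t ≤ |partialSum ρ (n t) ω - n t * μ|}
  refine ⟨fun t => t * log t * log (log t) * logLogTail (n t) * (1 - dev t), ?_, ?_⟩
  · have hnle : ∀ᶠ t in atTop, (n t : ℝ) ≤ (c + 1) * t := by
      filter_upwards [eventually_ge_atTop 1] with t ht
      linarith [Nat.ceil_lt_add_one (by positivity : 0 ≤ c * t)]
    have hdev : Tendsto dev atTop (𝓝 0) :=
      (isBigO_measureReal_abs_partialSum_sub_ge hρ hident hρ4 hδ hnle).trans_tendsto
        (tendsto_pow_atTop two_ne_zero).inv_tendsto_atTop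
    have hn : (fun t => (n t : ℝ)) ~[atTop] fun t => c * t :=
      isEquivalent_nat_ceil.comp_tendsto (tendsto_id.const_mul_atTop hc)
    simpa [c] using
      (tendsto_mul_logLogTail hc hn).mul (tendsto_const_nhds (x := (1 : ℝ)).sub hdev)
  · filter_upwards [eventually_ge_atTop (exp 1)] with t ht
    have ht0 : 0 < t := (exp_pos 1).trans_le ht
    have hnμ : c * t * μ ≤ n t * μ := mul_le_mul_of_nonneg_right (Nat.le_ceil _) hμ
    have hctμ : c * t * μ = t + δ * t := by rw [hδdef]; ring
    rw [mul_assoc, ← hL _ (Nat.one_le_ceil_iff.2 (by positivity))]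
    exact mul_le_mul_of_nonneg_left
      (le_measureReal_randomSum_tail hρmeas hρpos hLρ (by linarith))
      (mul_log_mul_log_log_nonneg ht)

end RandomSum

theorem random_sum_tail_asymptotics_general
    {Ω : Type*} [MeasurableSpace Ω] (P : Measure Ω) [IsProbabilityMeasure P]
    (ρ : ℕ → Ω → ℝ) (hρmeas : ∀ i, Measurable (ρ i)) (hρpos : ∀ i ω, 0 < ρ i ω)
    (hρiid : iIndepFun ρ P)
    (hρlaw : ∀ i, P.map (ρ i) = P.map (ρ 1))
    (hρmom : ∀ p : ℕ, Integrable (fun ω => ρ 1 ω ^ p) P)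
    (hρmean : 0 < ∫ ω, ρ 1 ω ∂P)
    (g : ℕ → ℝ)
    (hg : ∀ n : ℕ, 1 ≤ n → g n =
      ((n : ℝ))⁻¹ * (Real.log ((n : ℝ) + Real.exp 1 - 1))⁻¹ *
        (Real.log (Real.log ((n : ℝ) + Real.exp (Real.exp 1) - 1)))⁻¹)
    (L : Ω → ℕ)
    (hLtail : ∀ n : ℕ, 1 ≤ n → P {ω | n ≤ L ω} = ENNReal.ofReal (g n))
    (hLindep : IndepFun L (fun ω => fun i : ℕ => ρ i ω) P) :
    Tendsto (fun t : ℝ =>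
        t * Real.log t * Real.log (Real.log t) *
          (P {ω | t < (∑ i ∈ Finset.Icc 1 (L ω), ρ i ω) + 1}).toReal)
      atTop (nhds (∫ ω, ρ 1 ω ∂P)) := by
  have hident : ∀ i, IdentDistrib (ρ i) (ρ 1) P P := fun i =>
    ⟨(hρmeas i).aemeasurable, (hρmeas 1).aemeasurable, hρlaw i⟩
  have hρ4 : MemLp (ρ 1) 4 P := by
    refine (integrable_norm_rpow_iff (hρmeas 1).aestronglyMeasurable (p := 4) (by norm_num)
      (by norm_num)).1 ?_
    simpa [Even.pow_abs (by decide : Even 4)] using hρmom 4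
  have hL : ∀ n : ℕ, 1 ≤ n → P.real {ω | n ≤ L ω} = logLogTail n := fun n hn => by
    rw [measureReal_def, hLtail n hn, hg n hn]
    exact ENNReal.toReal_ofReal (logLogTail_nonneg (by exact_mod_cast hn))
  have hρnonneg : ∀ i ω, 0 ≤ ρ i ω := fun i ω => (hρpos i ω).le
  exact tendsto_nhds_of_forall_squeeze hρmean
    (fun b hb => exists_tendsto_ge_randomSum_tail hρnonneg hρiid hident hρ4 hL hb)
    (fun b hb0 hb => exists_tendsto_le_randomSum_tail hρmeas hρnonneg hρiid hident hρ4 hL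
      hLindep hb0 hb)

/-- **tail of the randomly stopped sum.** If `(ρ_i)` are i.i.d. positive random
variables with finite moments of every order and mean `E[ρ₁] > 0`, and `L` is independent of
`(ρ_i)` with `P(L ≥ n) = g(n) = n⁻¹ (log(n+e-1))⁻¹ (log log(n+e^e-1))⁻¹`, then
`P(∑_{i=1}^L ρ_i + 1 > t) ~ E[ρ₁] t⁻¹ (log t)⁻¹ (log log t)⁻¹` as `t → ∞`, i.e.
`t log(t) log log(t) P(∑_{i=1}^L ρ_i + 1 > t) → E[ρ₁]`. -/
theorem random_sum_tail_asymptotics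
    {Ω : Type*} [MeasurableSpace Ω] (P : Measure Ω) [IsProbabilityMeasure P]
    (ρ : ℕ → Ω → ℝ) (hρmeas : ∀ i, Measurable (ρ i)) (hρpos : ∀ i ω, 0 < ρ i ω)
    (hρiid : iIndepFun ρ P)
    (hρlaw : ∀ i, P.map (ρ i) = P.map (ρ 1))
    (hρmom : ∀ p : ℕ, Integrable (fun ω => ρ 1 ω ^ p) P)
    (hρmean : 0 < ∫ ω, ρ 1 ω ∂P)
    (g : ℕ → ℝ)
    (hg : ∀ n : ℕ, 1 ≤ n → g n =
      ((n : ℝ))⁻¹ * (Real.log ((n : ℝ) + Real.exp 1 - 1))⁻¹ *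
        (Real.log (Real.log ((n : ℝ) + Real.exp (Real.exp 1) - 1)))⁻¹)
    (L : Ω → ℕ) (hLmeas : Measurable L) (hLpos : ∀ ω, 1 ≤ L ω)
    (hLtail : ∀ n : ℕ, 1 ≤ n → P {ω | n ≤ L ω} = ENNReal.ofReal (g n))
    (hLindep : IndepFun L (fun ω => fun i : ℕ => ρ i ω) P) :
    Tendsto (fun t : ℝ =>
        t * Real.log t * Real.log (Real.log t) *
          (P {ω | t < (∑ i ∈ Finset.Icc 1 (L ω), ρ i ω) + 1}).toReal)
      atTop (nhds (∫ ω, ρ 1 ω ∂P)) :=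
  random_sum_tail_asymptotics_general P ρ hρmeas hρpos hρiid hρlaw hρmom hρmean g hg L hLtail
    hLindep
end
end
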